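/- If G(−∞) < G(+∞) < +∞ and μ₊ := sup supp(μ), then G(x) < G(μ₊) for all x < μ₊ and G(x) = G(μ₊) for all x ≥ μ₊; in particular G(+∞) = G(μ₊). -/

import Mathlib

open MeasureTheory ProbabilityTheory Filter

/-- If `G(−∞) < G(+∞) < +∞` and `muP = sup supp(μ)`, then `G(x) < G(muP)` for `x < muP`,
`G(x) = G(muP)` for `x ≥ muP`, and `G(+∞) = G(muP)`. -/
theorem G_max_at_mu_plus (μ ν : Measure ℝ) [IsProbabilityMeasure μ] [IsProbabilityMeasure ν]
    (am ap bm bp muP : ℝ) (ham : 0 ≤ am) (hap : 0 ≤ ap)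
    (hν : ν (Set.Icc (-am) ap)ᶜ = 0)
    (hbm : am ≤ bm) (hbp : ap ≤ bp)
    (hμ : μ (Set.Ioo (-bm) bp) = 0)
    (hD2p : bp = ap → μ {bp} = 0) (hD2m : bm = am → μ {-bm} = 0)
    (haμ : ap < muP)
    (hmuPlt : ∀ x < muP, cdf μ x < 1) (hmuPeq : ∀ x ≥ muP, cdf μ x = 1)
    (Gp Gm : EReal)
    (hGp : Tendsto (fun x : ℝ => ((2 * ∫ z in (0:ℝ)..x, (cdf ν z - cdf μ z) : ℝ) : EReal))
      atTop (nhds Gp))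
    (hGm : Tendsto (fun x : ℝ => ((2 * ∫ z in (0:ℝ)..x, (cdf ν z - cdf μ z) : ℝ) : EReal))
      atBot (nhds Gm))
    (hlt : Gm < Gp) (hfin : Gp < ⊤) :
    (∀ x < muP, (2 * ∫ z in (0:ℝ)..x, (cdf ν z - cdf μ z)) <
        2 * ∫ z in (0:ℝ)..muP, (cdf ν z - cdf μ z)) ∧
    (∀ x ≥ muP, (2 * ∫ z in (0:ℝ)..x, (cdf ν z - cdf μ z)) =
        2 * ∫ z in (0:ℝ)..muP, (cdf ν z - cdf μ z)) ∧
    Gp = ((2 * ∫ z in (0:ℝ)..muP, (cdf ν z - cdf μ z) : ℝ) : EReal) := by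
  set f : ℝ → ℝ := fun z => cdf ν z - cdf μ z with hfdef
  have hint : ∀ a b : ℝ, IntervalIntegrable f volume a b := fun a b =>
    ((cdf ν).mono.intervalIntegrable).sub ((cdf μ).mono.intervalIntegrable)
  -- cdf ν = 1 above ap
  have hν1 : ∀ z, ap ≤ z → cdf ν z = 1 := by
    intro z hz
    refine le_antisymm (cdf_le_one _ _) ?_
    have h1 : cdf ν ap = 1 := by
      rw [cdf_eq_real, measureReal_def]
      have h0 : ν (Set.Iic ap)ᶜ = 0 := by
        refine measure_mono_null ?_ hν
        intro t ht
        simp only [Set.mem_compl_iff, Set.mem_Iic, not_le, Set.mem_Icc, not_and_or] at ht ⊢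
        exact Or.inr ht
      have := (prob_compl_eq_zero_iff (μ := ν) (measurableSet_Iic (a := ap))).mp h0
      simp [this]
    calc (1:ℝ) = cdf ν ap := h1.symm
      _ ≤ cdf ν z := (cdf ν).mono hz
  -- cdf ν = 0 below -am
  have hν0 : ∀ z, z < -am → cdf ν z = 0 := by
    intro z hz
    rw [cdf_eq_real, measureReal_def]
    have h0 : ν (Set.Iic z) = 0 := by
      refine measure_mono_null ?_ hν
      intro t ht
      simp only [Set.mem_Iic] at ht
      simp only [Set.mem_compl_iff, Set.mem_Icc, not_and_or, not_le]
      exact Or.inl (lt_of_le_of_lt ht hz)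
    simp [h0]
  -- μ (Ioc (-bm) ap) = 0
  have hnull : μ (Set.Ioc (-bm) ap) = 0 := by
    rcases eq_or_lt_of_le hbp with h | h
    · have hsub : Set.Ioc (-bm) ap ⊆ Set.Ioo (-bm) bp ∪ {bp} := by
        intro t ht
        obtain ⟨ht1, ht2⟩ := Set.mem_Ioc.mp ht
        rcases lt_or_eq_of_le ht2 with h2 | h2
        · exact Or.inl (Set.mem_Ioo.mpr ⟨ht1, h ▸ h2⟩)
        · exact Or.inr (by simp [h2, h.symm])
      refine le_antisymm (le_trans (measure_mono hsub)
        (le_trans (measure_union_le _ _) ?_)) zero_le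
      rw [hμ, hD2p h.symm, add_zero]
    · refine measure_mono_null (fun t ht => ?_) hμ
      obtain ⟨ht1, ht2⟩ := Set.mem_Ioc.mp ht
      exact Set.mem_Ioo.mpr ⟨ht1, lt_of_le_of_lt ht2 h⟩
  -- cdf μ constant on [-am, ap]
  have hconst : ∀ x y, -am ≤ x → x ≤ y → y ≤ ap → cdf μ y = cdf μ x := by
    intro x y h1 h2 h3
    rw [cdf_eq_real, cdf_eq_real, measureReal_def, measureReal_def]
    congr 1
    have hxy : μ (Set.Ioc x y) = 0 := by
      refine measure_mono_null (fun t ht => ?_) hnull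
      obtain ⟨ht1, ht2⟩ := Set.mem_Ioc.mp ht
      exact Set.mem_Ioc.mpr ⟨lt_of_le_of_lt (le_trans (by linarith : -bm ≤ -am) h1) ht1,
        ht2.trans h3⟩
    refine le_antisymm ?_ (measure_mono (Set.Iic_subset_Iic.mpr h2))
    calc μ (Set.Iic y) = μ (Set.Iic x ∪ Set.Ioc x y) := by rw [Set.Iic_union_Ioc_eq_Iic h2]
      _ ≤ μ (Set.Iic x) + μ (Set.Ioc x y) := measure_union_le _ _
      _ = μ (Set.Iic x) := by rw [hxy, add_zero]
  -- f monotone on [-am, ap]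
  have hmono : ∀ x y, -am ≤ x → x ≤ y → y ≤ ap → f x ≤ f y := by
    intro x y h1 h2 h3
    simp only [hfdef]
    rw [hconst x y h1 h2 h3]
    have := (cdf ν).mono h2
    linarith
  -- f = 0 on [muP, ∞)
  have hf0 : ∀ z, muP ≤ z → f z = 0 := by
    intro z hz
    simp only [hfdef]
    rw [hν1 z (haμ.le.trans hz), hmuPeq z hz, sub_self]
  -- f ≤ 0 on (-∞, -am)
  have hfneg : ∀ z, z < -am → f z ≤ 0 := by
    intro z hz
    simp only [hfdef]
    rw [hν0 z hz]
    have := cdf_nonneg μ z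
    linarith
  -- Part 2: equality for x ≥ muP
  have heq : ∀ x, muP ≤ x →
      (∫ z in (0:ℝ)..x, f z) = ∫ z in (0:ℝ)..muP, f z := by
    intro x hx
    have hz : (∫ z in muP..x, f z) = 0 := by
      have hEq : Set.EqOn f (fun _ => (0:ℝ)) (Set.uIcc muP x) := by
        intro z hz
        rw [Set.uIcc_of_le hx] at hz
        exact hf0 z hz.1
      rw [intervalIntegral.integral_congr hEq, intervalIntegral.integral_zero]
    have hadd := intervalIntegral.integral_add_adjacent_intervals (hint 0 muP) (hint muP x)
    rw [← hadd, hz, add_zero]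
  -- Part 3: Gp = 2 * ∫₀^muP
  have hGpEq : Gp = ((2 * ∫ z in (0:ℝ)..muP, f z : ℝ) : EReal) := by
    refine tendsto_nhds_unique hGp ?_
    refine Tendsto.congr' ?_ tendsto_const_nhds
    filter_upwards [eventually_ge_atTop muP] with x hx
    rw [heq x hx]
  -- A: strict inequality for ap ≤ x < muP
  have hposA : ∀ x, ap ≤ x → x < muP →
      (∫ z in (0:ℝ)..x, f z) < ∫ z in (0:ℝ)..muP, f z := by
    intro x h1 h2
    have hpos : 0 < ∫ z in x..muP, f z := by
      refine intervalIntegral.intervalIntegral_pos_of_pos_on (hint x muP) ?_ h2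
      intro z hz
      simp only [hfdef]
      rw [hν1 z (h1.trans hz.1.le)]
      have := hmuPlt z hz.2
      linarith
    have hadd := intervalIntegral.integral_add_adjacent_intervals (hint 0 x) (hint x muP)
    rw [← hadd]
    linarith
  -- L1 : if f ≤ 0 on Iic x then G x ≤ Gm, hence G x < G muP
  have hL1 : ∀ x : ℝ, (∀ z, z ≤ x → f z ≤ 0) →
      (∫ z in (0:ℝ)..x, f z) < ∫ z in (0:ℝ)..muP, f z := by
    intro x hx
    have hle : ((2 * ∫ z in (0:ℝ)..x, f z : ℝ) : EReal) ≤ Gm := by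
      refine ge_of_tendsto hGm ?_
      filter_upwards [eventually_le_atBot x] with y hy
      have hnp : (∫ z in y..x, f z) ≤ 0 := by
        have h0 : 0 ≤ ∫ z in y..x, -f z :=
          intervalIntegral.integral_nonneg hy (fun u hu => neg_nonneg.mpr (hx u hu.2))
        rw [intervalIntegral.integral_neg] at h0
        linarith
      have hadd := intervalIntegral.integral_add_adjacent_intervals (hint 0 y) (hint y x)
      exact EReal.coe_le_coe_iff.mpr (by rw [← hadd]; linarith)
    have h1 : ((2 * ∫ z in (0:ℝ)..x, f z : ℝ) : EReal) <
        ((2 * ∫ z in (0:ℝ)..muP, f z : ℝ) : EReal) :=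
      lt_of_le_of_lt hle (hGpEq ▸ hlt)
    have := EReal.coe_lt_coe_iff.mp h1
    linarith
  refine ⟨?_, fun x hx => by rw [heq x hx], hGpEq⟩
  intro x hx
  have key : (∫ z in (0:ℝ)..x, f z) < ∫ z in (0:ℝ)..muP, f z := by
    rcases le_or_gt ap x with h | h
    · exact hposA x h hx
    rcases le_or_gt (-am) x with h2 | h2
    · by_cases hfx : 0 ≤ f x
      · have hnn : 0 ≤ ∫ z in x..ap, f z :=
          intervalIntegral.integral_nonneg h.le
            (fun u hu => le_trans hfx (hmono x u h2 hu.1 hu.2))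
        have hadd := intervalIntegral.integral_add_adjacent_intervals (hint 0 x) (hint x ap)
        have h3 := hposA ap le_rfl haμ
        have : (∫ z in (0:ℝ)..x, f z) ≤ ∫ z in (0:ℝ)..ap, f z := by rw [← hadd]; linarith
        linarith
      · push_neg at hfx
        refine hL1 x (fun z hz => ?_)
        rcases le_or_gt (-am) z with h4 | h4
        · exact le_of_lt (lt_of_le_of_lt (hmono z x h4 hz h.le) hfx)
        · exact hfneg z h4
    · exact hL1 x (fun z hz => hfneg z (lt_of_le_of_lt hz h2))
  linarith
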